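/- arXiv:1404.5012 — 3 statements merged into one kernel-verified Lean document; each statement's English description precedes it below -/
import Mathlib

section
/- Let C be an F_q-linear subspace of F_q^m × F_q^n × F_q^m of dimension m + k, and let Ĉ be its twisted dual constraint code. Then for all complex numbers x and y: Λ_Ĉ(x,y) = q^{−(m+k)} · F_m · Λ_C(x+(q−1)y, x−y) · F_m†, as an identity of complex matrices indexed by F_q^m × F_q^m. -/
/-!
STATEMENT 5: The MacWilliams identity for weight adjacency matrices of a
constraint code `C ⊆ F_q^m × F_q^n × F_q^m` of dimension `m + k` and its
twisted dual `Ĉ`: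
`Λ_Ĉ(x,y) = q^{−(m+k)} · F_m · Λ_C(x+(q−1)y, x−y) · F_m†`.
-/

open scoped Classical
open Matrix

noncomputable section

variable (p : ℕ) [Fact p.Prime] (F : Type) [Field F] [Fintype F] [Algebra (ZMod p) F]

/-- Hamming weight of a vector. -/
def wt {n : ℕ} (v : Fin n → F) : ℕ := (Finset.univ.filter fun i => v i ≠ 0).card

/-- The twisted dual constraint code
`Ĉ = {(w,p,w') : w·w₀ + p·p₀ − w'·w₁ = 0 for all (w₀,p₀,w₁) ∈ C}`. -/
def twistedDual {m n : ℕ} (C : Set ((Fin m → F) × (Fin n → F) × (Fin m → F))) :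
    Set ((Fin m → F) × (Fin n → F) × (Fin m → F)) :=
  {v | ∀ c ∈ C, (∑ i, v.1 i * c.1 i) + (∑ i, v.2.1 i * c.2.1 i)
      - (∑ i, v.2.2 i * c.2.2 i) = 0}

/-- The weight adjacency matrix `Λ_S(x,y)` of a set
`S ⊆ F_q^m × F_q^n × F_q^m`. -/
def WAM {m n : ℕ} (S : Set ((Fin m → F) × (Fin n → F) × (Fin m → F)))
    (x y : ℂ) : Matrix (Fin m → F) (Fin m → F) ℂ := fun w w' =>
  ∑ pv : Fin n → F, if (w, pv, w') ∈ S then x ^ (n - wt F pv) * y ^ wt F pv else 0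

/-- The Fourier matrix `F_m` with `(a,b)` entry `ω^{tr(a·b)}`. -/
def FourierMat (m : ℕ) : Matrix (Fin m → F) (Fin m → F) ℂ := fun a b =>
  Complex.exp (2 * Real.pi * Complex.I / p) ^
    (Algebra.trace (ZMod p) F (∑ i, a i * b i)).val

namespace Stmt5Aux

variable (p : ℕ) [Fact p.Prime] (F : Type) [Field F] [Fintype F] [Algebra (ZMod p) F]

/-- The standard additive character of `F`. -/
def Psi : AddChar F ℂ :=
  (AddChar.zmodChar p
      (Complex.isPrimitiveRoot_exp p (Fact.out (p := p.Prime)).ne_zero).pow_eq_one).compAddMonoidHom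
    (Algebra.trace (ZMod p) F).toAddMonoidHom

lemma Psi_apply (a : F) :
    Psi p F a = Complex.exp (2 * Real.pi * Complex.I / p) ^
      (Algebra.trace (ZMod p) F a).val := rfl

variable {p F}

lemma Psi_ne_one : Psi p F ≠ 1 := by
  have h1 : FiniteDimensional (ZMod p) F := Module.Finite.of_finite
  have htr : Algebra.trace (ZMod p) F ≠ 0 := Algebra.trace_ne_zero (ZMod p) F
  obtain ⟨a, ha⟩ : ∃ a, Algebra.trace (ZMod p) F a ≠ 0 := by
    by_contra h; push_neg at h; exact htr (LinearMap.ext fun a => h a)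
  rw [AddChar.ne_one_iff]
  refine ⟨a, fun hf => ha ?_⟩
  have hprim := AddChar.zmodChar_primitive_of_primitive_root p
    (Complex.isPrimitiveRoot_exp p (Fact.out (p := p.Prime)).ne_zero)
  exact (hprim.zmod_char_eq_one_iff p _).mp hf

lemma Psi_prim : (Psi p F).IsPrimitive := AddChar.IsPrimitive.of_ne_one Psi_ne_one

lemma Psi_star (a : F) : star (Psi p F a) = Psi p F (-a) := by
  have h : 0 < ringChar F :=
    Nat.pos_of_ne_zero (CharP.char_ne_zero_of_finite F (ringChar F))
  rw [Complex.star_def, AddChar.starComp_apply h, AddChar.inv_apply]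

lemma Psi_sum {ι : Type*} (s : Finset ι) (f : ι → F) :
    Psi p F (∑ i ∈ s, f i) = ∏ i ∈ s, Psi p F (f i) := by
  induction s using Finset.cons_induction with
  | empty => simp
  | cons i s hi ih => rw [Finset.sum_cons, Finset.prod_cons, AddChar.map_add_eq_mul, ih]

lemma sumA (c : F) :
    ∑ b : F, Psi p F (b * c) = if c = 0 then (Fintype.card F : ℂ) else 0 := by
  rw [AddChar.sum_mulShift c Psi_prim]
  split_ifs <;> simp

lemma stepB (x y : ℂ) (c : F) :
    ∑ b : F, Psi p F (b * c) * (if b = 0 then x else y)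
      = if c = 0 then x + ((Fintype.card F : ℂ) - 1) * y else x - y := by
  have key : ∀ b : F, Psi p F (b * c) * (if b = 0 then x else y)
      = Psi p F (b * c) * y + (if b = 0 then x - y else 0) := by
    intro b
    split_ifs with h
    · simp [h]
    · ring
  rw [Finset.sum_congr rfl fun b _ => key b, Finset.sum_add_distrib, ← Finset.sum_mul, sumA,
    Finset.sum_ite_eq' Finset.univ (0 : F) (fun _ => x - y)]
  simp only [Finset.mem_univ, if_true]
  split_ifs with h <;> ring



lemma prod_ite_wt {n : ℕ} (x y : ℂ) (v : Fin n → F) :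
    (∏ j, if v j = 0 then x else y) = x ^ (n - wt F v) * y ^ wt F v := by
  have hsplit : (Finset.univ.filter fun j => v j = 0).card + wt F v = n := by
    rw [wt]
    simpa using Finset.card_filter_add_card_filter_not
      (s := (Finset.univ : Finset (Fin n))) (p := fun j => v j = 0)
  rw [Finset.prod_ite, Finset.prod_const, Finset.prod_const]
  congr 2
  omega

lemma stepC {n : ℕ} (x y : ℂ) (pv : Fin n → F) :
    ∑ pb : Fin n → F, Psi p F (∑ j, pb j * pv j) * (x ^ (n - wt F pb) * y ^ wt F pb)
      = (x + ((Fintype.card F : ℂ) - 1) * y) ^ (n - wt F pv) * (x - y) ^ wt F pv := by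
  have key : ∀ pb : Fin n → F,
      Psi p F (∑ j, pb j * pv j) * (x ^ (n - wt F pb) * y ^ wt F pb)
        = ∏ j, (Psi p F (pb j * pv j) * if pb j = 0 then x else y) := by
    intro pb
    rw [Finset.prod_mul_distrib, ← Psi_sum, prod_ite_wt]
  rw [Finset.sum_congr rfl fun pb _ => key pb]
  have h2 : ∑ pb : Fin n → F, ∏ j, (Psi p F (pb j * pv j) * if pb j = 0 then x else y)
      = ∏ j, ∑ b : F, (Psi p F (b * pv j) * if b = 0 then x else y) := by
    rw [Finset.prod_univ_sum]
    rw [Fintype.piFinset_univ]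
  rw [h2, Finset.prod_congr rfl fun j _ => stepB x y (pv j), prod_ite_wt]

lemma stepD {m n : ℕ} (C : Submodule F ((Fin m → F) × (Fin n → F) × (Fin m → F)))
    (w w' : Fin m → F) (pb : Fin n → F) :
    ∑ c : C, Psi p F ((∑ i, w i * (c : (Fin m → F) × (Fin n → F) × (Fin m → F)).1 i)
        + (∑ i, pb i * (c : (Fin m → F) × (Fin n → F) × (Fin m → F)).2.1 i)
        - (∑ i, w' i * (c : (Fin m → F) × (Fin n → F) × (Fin m → F)).2.2 i))
      = if (w, pb, w') ∈ twistedDual F (C : Set _) then (Fintype.card C : ℂ) else 0 := by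
  have h1 : ∀ (k : ℕ) (u v : Fin k → F) (t : F),
      ∑ i, u i * (t * v i) = t * ∑ i, u i * v i := by
    intro k u v t; rw [Finset.mul_sum]; exact Finset.sum_congr rfl fun i _ => by ring
  let L : ((Fin m → F) × (Fin n → F) × (Fin m → F)) →ₗ[F] F :=
    { toFun := fun v => (∑ i, w i * v.1 i) + (∑ i, pb i * v.2.1 i) - (∑ i, w' i * v.2.2 i)
      map_add' := by
        intro a b
        simp only [Prod.fst_add, Prod.snd_add, Pi.add_apply, mul_add, Finset.sum_add_distrib]
        ring
      map_smul' := by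
        intro t a
        simp only [Prod.smul_fst, Prod.smul_snd, Pi.smul_apply, smul_eq_mul, RingHom.id_apply]
        rw [h1, h1, h1]
        ring }
  have hLapp : ∀ v : (Fin m → F) × (Fin n → F) × (Fin m → F),
      L v = (∑ i, w i * v.1 i) + (∑ i, pb i * v.2.1 i) - (∑ i, w' i * v.2.2 i) := fun _ => rfl
  let χ : AddChar C ℂ := (Psi p F).compAddMonoidHom ((L.comp C.subtype).toAddMonoidHom)
  have hχapp : ∀ c : C, χ c = Psi p F (L (c : (Fin m → F) × (Fin n → F) × (Fin m → F))) :=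
    fun c => rfl
  have hsum : (∑ c : C, Psi p F ((∑ i, w i * (c : (Fin m → F) × (Fin n → F) × (Fin m → F)).1 i)
        + (∑ i, pb i * (c : (Fin m → F) × (Fin n → F) × (Fin m → F)).2.1 i)
        - (∑ i, w' i * (c : (Fin m → F) × (Fin n → F) × (Fin m → F)).2.2 i)))
      = ∑ c : C, χ c :=
    Finset.sum_congr rfl fun c _ => by rw [hχapp, hLapp]
  rw [hsum]
  by_cases hmem : (w, pb, w') ∈ twistedDual F (C : Set ((Fin m → F) × (Fin n → F) × (Fin m → F)))
  · rw [if_pos hmem]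
    have hχ1 : χ = 1 := by
      ext c
      rw [hχapp, hLapp]
      have := hmem (c : (Fin m → F) × (Fin n → F) × (Fin m → F)) c.2
      simp only at this
      rw [this, AddChar.map_zero_eq_one, AddChar.one_apply]
    exact AddChar.sum_eq_card_of_eq_one hχ1
  · rw [if_neg hmem]
    have hχ : χ ≠ 1 := by
      simp only [twistedDual, Set.mem_setOf_eq] at hmem
      push_neg at hmem
      obtain ⟨c0, hc0C, hc0⟩ := hmem
      have hLc0 : L c0 ≠ 0 := by rw [hLapp]; exact hc0
      obtain ⟨b, hb⟩ := AddChar.ne_one_iff.mp (Psi_ne_one (p := p) (F := F))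
      rw [AddChar.ne_one_iff]
      refine ⟨(b * (L c0)⁻¹) • ⟨c0, hc0C⟩, ?_⟩
      have heq : L ((b * (L c0)⁻¹) • c0) = b := by
        rw [_root_.map_smul, smul_eq_mul, mul_assoc, inv_mul_cancel₀ hLc0, mul_one]
      have : χ ((b * (L c0)⁻¹) • (⟨c0, hc0C⟩ : C)) = Psi p F b := by
        rw [hχapp]
        have hcoe : (((b * (L c0)⁻¹) • (⟨c0, hc0C⟩ : C) : C) :
            (Fin m → F) × (Fin n → F) × (Fin m → F)) = (b * (L c0)⁻¹) • c0 := rfl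
        rw [hcoe, heq]
      rw [this]
      simpa using hb
    rw [AddChar.sum_eq_zero_of_ne_one hχ]
end Stmt5Aux

theorem stmt5 (m n k : ℕ)
    (C : Submodule F ((Fin m → F) × (Fin n → F) × (Fin m → F)))
    (hC : Module.finrank F C = m + k) (x y : ℂ) :
    WAM F (twistedDual F (C : Set ((Fin m → F) × (Fin n → F) × (Fin m → F)))) x y
      = ((Fintype.card F : ℂ) ^ (m + k))⁻¹ •
          (FourierMat p F m *
            WAM F (C : Set ((Fin m → F) × (Fin n → F) × (Fin m → F)))
              (x + ((Fintype.card F : ℂ) - 1) * y) (x - y) *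
            (FourierMat p F m)ᴴ) := by
  classical
  have hq0 : (Fintype.card F : ℂ) ≠ 0 := Nat.cast_ne_zero.mpr Fintype.card_ne_zero
  have hcardC : (Fintype.card C : ℂ) = (Fintype.card F : ℂ) ^ (m + k) := by
    rw [Module.card_eq_pow_finrank (K := F) (V := C), hC]
    push_cast
    ring
  ext w w'
  rw [Matrix.smul_apply, Matrix.mul_apply]
  simp_rw [Matrix.mul_apply, Matrix.conjTranspose_apply]
  set X : ℂ := x + ((Fintype.card F : ℂ) - 1) * y with hX
  set g : (Fin m → F) × (Fin n → F) × (Fin m → F) → ℂ := fun t =>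
    Stmt5Aux.Psi p F (∑ i, w i * t.1 i)
      * (X ^ (n - wt F t.2.1) * (x - y) ^ wt F t.2.1)
      * Stmt5Aux.Psi p F (-∑ i, w' i * t.2.2 i) with hg
  have key : (∑ v'' : Fin m → F, (∑ v : Fin m → F, FourierMat p F m w v *
        WAM F (C : Set ((Fin m → F) × (Fin n → F) × (Fin m → F))) X (x - y) v v'')
        * star (FourierMat p F m w' v''))
      = ∑ pb : Fin n → F,
          (if (w, pb, w') ∈ twistedDual F (C : Set ((Fin m → F) × (Fin n → F) × (Fin m → F)))
            then (Fintype.card C : ℂ) else 0) * (x ^ (n - wt F pb) * y ^ wt F pb) := by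
    have hFm : ∀ a b : Fin m → F, FourierMat p F m a b = Stmt5Aux.Psi p F (∑ i, a i * b i) :=
      fun a b => rfl
    have hFmStar : ∀ a b : Fin m → F,
        star (FourierMat p F m a b) = Stmt5Aux.Psi p F (-∑ i, a i * b i) := by
      intro a b
      rw [hFm, Stmt5Aux.Psi_star]
    calc (∑ v'' : Fin m → F, (∑ v : Fin m → F, FourierMat p F m w v *
            WAM F (C : Set ((Fin m → F) × (Fin n → F) × (Fin m → F))) X (x - y) v v'')
            * star (FourierMat p F m w' v''))
        = ∑ v'' : Fin m → F, ∑ v : Fin m → F, ∑ pv : Fin n → F,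
            (if (v, pv, v'') ∈ (C : Set ((Fin m → F) × (Fin n → F) × (Fin m → F)))
              then g (v, pv, v'') else 0) := by
          refine Finset.sum_congr rfl fun v'' _ => ?_
          rw [Finset.sum_mul]
          refine Finset.sum_congr rfl fun v _ => ?_
          simp only [WAM]
          rw [Finset.mul_sum, Finset.sum_mul]
          refine Finset.sum_congr rfl fun pv _ => ?_
          by_cases hm : (v, pv, v'') ∈ (C : Set ((Fin m → F) × (Fin n → F) × (Fin m → F)))
          · rw [if_pos hm, if_pos hm, hg]
            simp only
            rw [hFm, hFmStar]
          · rw [if_neg hm, if_neg hm, mul_zero, zero_mul]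
      _ = ∑ t : (Fin m → F) × (Fin n → F) × (Fin m → F),
            (if t ∈ (C : Set ((Fin m → F) × (Fin n → F) × (Fin m → F))) then g t else 0) := by
          rw [Fintype.sum_prod_type]
          simp only [Fintype.sum_prod_type]
          conv_lhs => rw [Finset.sum_comm]
          exact Finset.sum_congr rfl fun v _ => Finset.sum_comm
      _ = ∑ c : C, g (c : (Fin m → F) × (Fin n → F) × (Fin m → F)) := by
          rw [← Finset.sum_filter]
          exact Finset.sum_subtype _ (by simp) g
      _ = ∑ c : C, ∑ pb : Fin n → F,
            Stmt5Aux.Psi p F ((∑ i, w i * (c : (Fin m → F) × (Fin n → F) × (Fin m → F)).1 i)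
              + (∑ j, pb j * (c : (Fin m → F) × (Fin n → F) × (Fin m → F)).2.1 j)
              - (∑ i, w' i * (c : (Fin m → F) × (Fin n → F) × (Fin m → F)).2.2 i))
              * (x ^ (n - wt F pb) * y ^ wt F pb) := by
          refine Finset.sum_congr rfl fun c _ => ?_
          rw [hg]
          simp only
          rw [hX, ← Stmt5Aux.stepC (p := p) x y (c : (Fin m → F) × (Fin n → F) × (Fin m → F)).2.1,
            Finset.mul_sum, Finset.sum_mul]
          refine Finset.sum_congr rfl fun pb _ => ?_
          rw [sub_eq_add_neg, AddChar.map_add_eq_mul, AddChar.map_add_eq_mul]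
          ring
      _ = ∑ pb : Fin n → F, (∑ c : C,
            Stmt5Aux.Psi p F ((∑ i, w i * (c : (Fin m → F) × (Fin n → F) × (Fin m → F)).1 i)
              + (∑ j, pb j * (c : (Fin m → F) × (Fin n → F) × (Fin m → F)).2.1 j)
              - (∑ i, w' i * (c : (Fin m → F) × (Fin n → F) × (Fin m → F)).2.2 i)))
              * (x ^ (n - wt F pb) * y ^ wt F pb) := by
          rw [Finset.sum_comm]
          exact Finset.sum_congr rfl fun pb _ => (Finset.sum_mul _ _ _).symm
      _ = ∑ pb : Fin n → F,
          (if (w, pb, w') ∈ twistedDual F (C : Set ((Fin m → F) × (Fin n → F) × (Fin m → F)))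
            then (Fintype.card C : ℂ) else 0) * (x ^ (n - wt F pb) * y ^ wt F pb) := by
          refine Finset.sum_congr rfl fun pb _ => ?_
          rw [Stmt5Aux.stepD C w w' pb]
  rw [key, smul_eq_mul, Finset.mul_sum]
  simp only [WAM]
  refine Finset.sum_congr rfl fun pb _ => ?_
  by_cases hm : (w, pb, w') ∈ twistedDual F (C : Set ((Fin m → F) × (Fin n → F) × (Fin m → F)))
  · rw [if_pos hm, if_pos hm, hcardC]
    field_simp
  · rw [if_neg hm, if_neg hm, zero_mul, mul_zero]
end
end

section
/- Let A₀ be an m×m matrix, B₀ a k×m matrix, C₀ an m×(n−k) matrix, E₀ a k×(n−k) matrix, and F an m×k matrix, all over F_q. Define the systematic encoder map φ_S(w,u) = (w, (u, wC₀+uE₀), wA₀+uB₀) and the nonsystematic encoder map φ(w,u) = (w, (u+wF, wC₀+wF E₀+uE₀), wA₀+wF B₀+uB₀) for w ∈ F_q^m, u ∈ F_q^k. For an encoder map ψ, define its input-output weight adjacency matrix Δ^ψ(x_I,y_I,x_O,y_O) as the matrix indexed by F_q^m × F_q^m whose (w,w') entry is the polynomial Σ_u x_I^{k−wt(u)} y_I^{wt(u)}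 x_O^{n−wt(p)} y_O^{wt(p)}, the sum being over all u ∈ F_q^k whose output memory under ψ(w,u) equals w', where p ∈ F_q^k × F_q^{n−k} is the output block of ψ(w,u) and wt(p) is its Hamming weight as a vector of length n. Let Λ(x_O,y_O) = Δ^{φ_S}(1,1,x_O,y_O). If every entry of Δ^φ(x_I,y_I,x_O,y_O), as a polynomial in the four variables, is a monomial (has at most one term), then for all w, w' ∈ F_q^m: the (w,w') entry of Δ^φ(x_I,y_I,x_O,y_O) equals the (w, w'−wF B₀) entry of Δ^{φ_S}(x_I,y_I,1,1) times the (w,w') entry of Λ(x_O,y_O). -/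
/-!
STATEMENT 8: If all entries of the input-output weight adjacency matrix of a
nonsystematic encoder `φ` (with `L = I_k`) are monomials, then the `(w,w')`
entry of `Δ^φ(x_I,y_I,x_O,y_O)` equals the `(w, w'−wFB₀)` entry of
`Δ^{φ_S}(x_I,y_I,1,1)` times the `(w,w')` entry of `Λ(x_O,y_O) = Δ^{φ_S}(1,1,x_O,y_O)`.
-/

open scoped Classical
open Matrix

noncomputable section

variable (F : Type) [Field F] [Fintype F]

variable (m n k : ℕ) (A₀ : Matrix (Fin m) (Fin m) F) (B₀ : Matrix (Fin k) (Fin m) F)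
  (C₀ : Matrix (Fin m) (Fin (n - k)) F) (E₀ : Matrix (Fin k) (Fin (n - k)) F)
  (Fm : Matrix (Fin m) (Fin k) F)

/-- The systematic encoder map: from `(w,u)` it produces the output block
`(u, wC₀ + uE₀)` together with the output memory `wA₀ + uB₀`. -/
def phiS (w : Fin m → F) (u : Fin k → F) :
    ((Fin k → F) × (Fin (n - k) → F)) × (Fin m → F) :=
  ((u, w ᵥ* C₀ + u ᵥ* E₀), w ᵥ* A₀ + u ᵥ* B₀)

/-- The nonsystematic encoder map (with `L = I_k`): from `(w,u)` it produces
the output block `(u + wF, wC₀ + wFE₀ + uE₀)` together with the output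
memory `wA₀ + wFB₀ + uB₀`. -/
def phiN (w : Fin m → F) (u : Fin k → F) :
    ((Fin k → F) × (Fin (n - k) → F)) × (Fin m → F) :=
  ((u + w ᵥ* Fm, w ᵥ* C₀ + (w ᵥ* Fm) ᵥ* E₀ + u ᵥ* E₀),
    w ᵥ* A₀ + (w ᵥ* Fm) ᵥ* B₀ + u ᵥ* B₀)

/-- The input-output weight adjacency matrix `Δ^ψ(x_I,y_I,x_O,y_O)` of an
encoder map `ψ`, with coefficients in an arbitrary commutative ring. -/
def IOWAM {R : Type} [CommRing R]
    (ψ : (Fin m → F) → (Fin k → F) → ((Fin k → F) × (Fin (n - k) → F)) × (Fin m → F))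
    (xI yI xO yO : R) : Matrix (Fin m → F) (Fin m → F) R := fun w w' =>
  ∑ u : Fin k → F, if (ψ w u).2 = w' then
    xI ^ (k - wt F u) * yI ^ wt F u *
      xO ^ (n - (wt F (ψ w u).1.1 + wt F (ψ w u).1.2)) *
      yO ^ (wt F (ψ w u).1.1 + wt F (ψ w u).1.2)
  else 0

lemma wt_eq_zero_iff {n : ℕ} (v : Fin n → F) : wt F v = 0 ↔ v = 0 := by
  simp [wt, Finset.card_eq_zero, Finset.filter_eq_empty_iff, funext_iff]

lemma term_eq_monomial (a b c d : ℕ) :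
    (MvPolynomial.X 0 : MvPolynomial (Fin 4) ℤ) ^ a * MvPolynomial.X 1 ^ b *
      MvPolynomial.X 2 ^ c * MvPolynomial.X 3 ^ d
    = MvPolynomial.monomial
        (Finsupp.single 0 a + Finsupp.single 1 b + Finsupp.single 2 c + Finsupp.single 3 d)
        (1 : ℤ) := by
  simp [MvPolynomial.X_pow_eq_monomial, MvPolynomial.monomial_mul]

/-- The shifted systematic encoder equals the nonsystematic one. -/
lemma phiS_shift (w : Fin m → F) (u : Fin k → F) :
    phiS F m n k A₀ B₀ C₀ E₀ w (u + w ᵥ* Fm) = phiN F m n k A₀ B₀ C₀ E₀ Fm w u := by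
  simp only [phiS, phiN, Matrix.add_vecMul, Prod.mk.injEq, true_and]
  refine ⟨?_, ?_⟩ <;> abel

theorem stmt8
    -- every entry of `Δ^φ`, as a polynomial in the four variables
    -- `x_I, y_I, x_O, y_O`, is a monomial (has at most one term):
    (hmono : ∀ w w' : Fin m → F,
      ((IOWAM F m n k (phiN F m n k A₀ B₀ C₀ E₀ Fm)
          (MvPolynomial.X 0 : MvPolynomial (Fin 4) ℤ) (MvPolynomial.X 1)
          (MvPolynomial.X 2) (MvPolynomial.X 3)) w w').support.card ≤ 1)
    (xI yI xO yO : ℂ) (w w' : Fin m → F) :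
    IOWAM F m n k (phiN F m n k A₀ B₀ C₀ E₀ Fm) xI yI xO yO w w'
      = IOWAM F m n k (phiS F m n k A₀ B₀ C₀ E₀) xI yI 1 1 w (w' - (w ᵥ* Fm) ᵥ* B₀) *
        IOWAM F m n k (phiS F m n k A₀ B₀ C₀ E₀) 1 1 xO yO w w' := by
  classical
  -- exponent function
  set D : (Fin k → F) → (Fin 4 →₀ ℕ) := fun u =>
    Finsupp.single 0 (k - wt F u) + Finsupp.single 1 (wt F u) +
    Finsupp.single 2 (n - (wt F (phiN F m n k A₀ B₀ C₀ E₀ Fm 0 u).1.1 +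
        wt F (phiN F m n k A₀ B₀ C₀ E₀ Fm 0 u).1.2)) +
    Finsupp.single 3 (wt F (phiN F m n k A₀ B₀ C₀ E₀ Fm 0 u).1.1 +
        wt F (phiN F m n k A₀ B₀ C₀ E₀ Fm 0 u).1.2) with hD
  -- Step 1: the kernel of right multiplication by B₀ is trivial.
  have hK : ∀ u : Fin k → F, u ᵥ* B₀ = 0 → u = 0 := by
    intro u₀ hu₀
    by_contra hne
    have h := hmono 0 0
    have hcond : ∀ u : Fin k → F, (phiN F m n k A₀ B₀ C₀ E₀ Fm 0 u).2 = 0 ↔ u ᵥ* B₀ = 0 := by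
      intro u; simp [phiN]
    have hmem : ∀ u : Fin k → F, u ᵥ* B₀ = 0 →
        D u ∈ ((IOWAM F m n k (phiN F m n k A₀ B₀ C₀ E₀ Fm)
          (MvPolynomial.X 0 : MvPolynomial (Fin 4) ℤ) (MvPolynomial.X 1)
          (MvPolynomial.X 2) (MvPolynomial.X 3)) 0 0).support := by
      intro u hu
      rw [MvPolynomial.mem_support_iff]
      have : ((IOWAM F m n k (phiN F m n k A₀ B₀ C₀ E₀ Fm)
          (MvPolynomial.X 0 : MvPolynomial (Fin 4) ℤ) (MvPolynomial.X 1)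
          (MvPolynomial.X 2) (MvPolynomial.X 3)) 0 0).coeff (D u)
          = ∑ u' : Fin k → F, if u' ᵥ* B₀ = 0 then (if D u' = D u then 1 else 0) else 0 := by
        rw [IOWAM, MvPolynomial.coeff_sum]
        refine Finset.sum_congr rfl fun u' _ => ?_
        rw [apply_ite (MvPolynomial.coeff (D u))]
        refine if_congr (hcond u') ?_ (by simp)
        rw [term_eq_monomial]
        simp only [MvPolynomial.coeff_monomial, hD]
      rw [this]
      have hpos : (0:ℤ) < ∑ u' : Fin k → F, if u' ᵥ* B₀ = 0 then (if D u' = D u then 1 else 0) else 0 := by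
        refine Finset.sum_pos' (fun u' _ => by positivity) ⟨u, Finset.mem_univ u, by simp [hu]⟩
      exact hpos.ne'
    have h0 : (0 : Fin k → F) ᵥ* B₀ = 0 := by simp
    have hne' : D 0 ≠ D u₀ := by
      intro hEq
      have h1 : (D 0) 1 = (D u₀) 1 := by rw [hEq]
      have : wt F (0 : Fin k → F) = wt F u₀ := by
        simpa [hD, Finsupp.single_apply] using h1
      rw [(wt_eq_zero_iff F (0 : Fin k → F)).mpr rfl] at this
      exact hne ((wt_eq_zero_iff F u₀).mp this.symm)
    have : 1 < ((IOWAM F m n k (phiN F m n k A₀ B₀ C₀ E₀ Fm)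
          (MvPolynomial.X 0 : MvPolynomial (Fin 4) ℤ) (MvPolynomial.X 1)
          (MvPolynomial.X 2) (MvPolynomial.X 3)) 0 0).support.card :=
      Finset.one_lt_card.mpr ⟨D 0, hmem 0 h0, D u₀, hmem u₀ hu₀, hne'⟩
    omega
  -- Step 2: reduce all three sums to a single term.
  by_cases hex : ∃ u : Fin k → F, w ᵥ* A₀ + (w ᵥ* Fm) ᵥ* B₀ + u ᵥ* B₀ = w'
  · obtain ⟨u₀, hu₀⟩ := hex
    have huniq : ∀ u : Fin k → F,
        (w ᵥ* A₀ + (w ᵥ* Fm) ᵥ* B₀ + u ᵥ* B₀ = w') ↔ u = u₀ := by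
      intro u
      constructor
      · intro hu
        have hsub : (u - u₀) ᵥ* B₀ = 0 := by
          rw [Matrix.sub_vecMul]
          have h1 : u ᵥ* B₀ = u₀ ᵥ* B₀ := by
            have := hu.trans hu₀.symm
            exact add_left_cancel this
          rw [h1, sub_self]
        have := hK _ hsub
        exact sub_eq_zero.mp this
      · rintro rfl; exact hu₀
    have hS1 : ∀ u : Fin k → F,
        (phiS F m n k A₀ B₀ C₀ E₀ w u).2 = w' - (w ᵥ* Fm) ᵥ* B₀ ↔ u = u₀ := by
      intro u
      rw [← huniq u]
      simp only [phiS]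
      rw [eq_sub_iff_add_eq]
      constructor
      · intro h; rw [← h]; abel
      · intro h; rw [← h]; abel
    have hS2 : ∀ v : Fin k → F,
        (phiS F m n k A₀ B₀ C₀ E₀ w v).2 = w' ↔ v = u₀ + w ᵥ* Fm := by
      intro v
      simp only [phiS]
      constructor
      · intro h
        have h2 : w ᵥ* A₀ + (u₀ + w ᵥ* Fm) ᵥ* B₀ = w' := by
          rw [Matrix.add_vecMul]
          rw [← hu₀]; abel
        have h3 : v ᵥ* B₀ = (u₀ + w ᵥ* Fm) ᵥ* B₀ := add_left_cancel (h.trans h2.symm)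
        have hsub : (v - (u₀ + w ᵥ* Fm)) ᵥ* B₀ = 0 := by
          rw [Matrix.sub_vecMul, h3, sub_self]
        exact sub_eq_zero.mp (hK _ hsub)
      · rintro rfl
        rw [Matrix.add_vecMul, ← hu₀]; abel
    have hN : ∀ u : Fin k → F,
        (phiN F m n k A₀ B₀ C₀ E₀ Fm w u).2 = w' ↔ u = u₀ := by
      intro u; rw [← huniq u]; rfl
    simp only [IOWAM]
    rw [Finset.sum_congr rfl (fun u _ => if_congr (hN u) rfl rfl),
        Finset.sum_congr rfl (fun u _ => if_congr (hS1 u) rfl rfl),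
        Finset.sum_congr rfl (fun v _ => if_congr (hS2 v) rfl rfl),
        Finset.sum_ite_eq' Finset.univ u₀, Finset.sum_ite_eq' Finset.univ u₀,
        Finset.sum_ite_eq' Finset.univ (u₀ + w ᵥ* Fm)]
    simp only [Finset.mem_univ, if_true, phiS_shift F m n k A₀ B₀ C₀ E₀ Fm w u₀]
    ring
  · push_neg at hex
    have hN : ∀ u : Fin k → F, ¬ (phiN F m n k A₀ B₀ C₀ E₀ Fm w u).2 = w' := fun u => hex u
    have hS1 : ∀ u : Fin k → F,
        ¬ (phiS F m n k A₀ B₀ C₀ E₀ w u).2 = w' - (w ᵥ* Fm) ᵥ* B₀ := by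
      intro u h
      simp only [phiS] at h
      rw [eq_sub_iff_add_eq] at h
      exact hex u (by rw [← h]; abel)
    simp only [IOWAM]
    rw [Finset.sum_congr rfl (fun u _ => if_neg (hN u)),
        Finset.sum_congr rfl (fun u _ => if_neg (hS1 u))]
    simp
end
end

section
/- Let C be an F_q-linear subspace of F_q^m × F_q^n × F_q^m of dimension m + k, let Ĉ be its twisted dual constraint code, and let y ∈ ℂ satisfy 1 + (q−1)y ≠ 0. Then in ℂ[[D]], the (0,0) entry of (I − D·Λ_Ĉ(1,y))⁻¹ equals (1/q^m) times the (0,0) entry of F_m · (I − D·((1+(q−1)y)^n/q^k)·Λ_C(1, (1−y)/(1+(q−1)y)))⁻¹ · F_m†, where 0 denotes the zero vector of F_q^m. (This expresses the total weight generating function W_{C^⊥}(y,D) of the dual convolutional code in terms of the weight adjacency matrix of C.) -/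
/-!
Let `ψ(x) = ω^{tr x}`, `z = (1-y)/(1+(q-1)y)`, `B = ((1+(q-1)y)^n / q^k) Λ_C(1,z)`, and let `Φ`
be the character matrix `Φ a b = ψ(a·b)` (this is `F_m`), so that `Φ Φ† = q^m I` by orthogonality
of characters. Expanding `(Φ B Φ†)_{w,w'}` as a sum over `(a,u,b) ∈ C` and inserting the
MacWilliams identity `Σ_v ψ(v·u) y^{wt v} = (1+(q-1)y)^n z^{wt u}` (a product of one-coordinate
identities) turns it into `q^{-k} Σ_v y^{wt v} Σ_{t ∈ C} ψ(⟨(w,v,w'), t⟩)` for the twisted pairing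
`⟨·,·⟩`; the inner sum is `|C| = q^{m+k}` when `(w,v,w') ∈ Ĉ` and `0` otherwise. Hence
`Λ_Ĉ(1,y) = Φ B Φ⁻¹`, and the inverses of `I - D Λ_Ĉ(1,y)` and `I - D B` are conjugate by `Φ` too.
-/

open scoped Classical
open Matrix

noncomputable section

variable (p : ℕ) [Fact p.Prime] (F : Type) [Field F] [Fintype F] [Algebra (ZMod p) F]

/-- The matrix `I − D·M` over `ℂ[[D]]` associated with a complex matrix `M`. -/
def oneSubDM {m : ℕ} (M : Matrix (Fin m → F) (Fin m → F) ℂ) :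
    Matrix (Fin m → F) (Fin m → F) (PowerSeries ℂ) :=
  1 - (PowerSeries.X : PowerSeries ℂ) • M.map (@PowerSeries.C ℂ _)

namespace AddChar

theorem map_sum_eq_prod {A M ι : Type*} [AddCommMonoid A] [CommMonoid M] (ψ : AddChar A M)
    (s : Finset ι) (f : ι → A) : ψ (∑ i ∈ s, f i) = ∏ i ∈ s, ψ (f i) := by
  induction s using Finset.cons_induction with
  | empty => simp
  | cons i s hi ih => rw [Finset.sum_cons, Finset.prod_cons, map_add_eq_mul, ih]

variable {K R : Type*} [Field K] [CommRing R] [IsDomain R] {ψ : AddChar K R}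

theorem IsPrimitive.sum_apply_linearMap (hψ : ψ.IsPrimitive) {V : Type*} [AddCommGroup V]
    [Module K V] [Fintype V] (ℓ : V →ₗ[K] K) :
    ∑ x, ψ (ℓ x) = if ℓ = 0 then (Fintype.card V : R) else 0 := by
  have trivial_iff : ψ.compAddMonoidHom ℓ.toAddMonoidHom = 0 ↔ ℓ = 0 := by
    refine ⟨fun h => LinearMap.ext fun x => ?_, fun h => ?_⟩
    · by_contra hx
      obtain ⟨t, ht⟩ := ne_one_iff.mp (hψ hx)
      have htx := DFunLike.congr_fun h (t • x)
      simp only [compAddMonoidHom_apply, LinearMap.toAddMonoidHom_coe, map_smul, smul_eq_mul,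
        zero_apply] at htx
      exact ht (by rw [mulShift_apply, mul_comm, htx])
    · subst h
      ext x
      simp only [compAddMonoidHom_apply, LinearMap.toAddMonoidHom_coe, LinearMap.zero_apply,
        map_zero_eq_one, zero_apply]
  calc ∑ x, ψ (ℓ x) = ∑ x, ψ.compAddMonoidHom ℓ.toAddMonoidHom x := rfl
    _ = _ := sum_eq_ite _
    _ = _ := by simp only [trivial_iff]

theorem IsPrimitive.sum_apply_dotProduct [Fintype K] (hψ : ψ.IsPrimitive) {ι : Type*}
    [Fintype ι] [DecidableEq ι] (d : ι → K) :
    ∑ c : ι → K, ψ (d ⬝ᵥ c) = if d = 0 then (Fintype.card K : R) ^ Fintype.card ι else 0 := by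
  refine (hψ.sum_apply_linearMap (dotProductEquiv K ι d)).trans ?_
  simp only [LinearEquiv.map_eq_zero_iff, Fintype.card_fun, Nat.cast_pow]

theorem IsPrimitive.sum_mul_ite [Fintype K] (hψ : ψ.IsPrimitive) (a : K) (y : R) :
    ∑ t : K, ψ (t * a) * (if t = 0 then 1 else y)
      = if a = 0 then 1 + ((Fintype.card K : R) - 1) * y else 1 - y := by
  have split : ∀ t : K, ψ (t * a) * (if t = 0 then 1 else y)
      = y * ψ (t * a) + if t = 0 then 1 - y else 0 := by
    intro t
    by_cases ht : t = 0 <;> simp [ht, mul_comm]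
  simp only [split, Finset.sum_add_distrib, ← Finset.mul_sum, sum_mulShift a hψ,
    Finset.sum_ite_eq', Finset.mem_univ, if_true]
  split_ifs <;> ring

end AddChar

section HammingWeight

variable {K : Type} {R : Type*} [Field K] [CommMonoid R] {n : ℕ}

theorem pow_wt_eq_prod (v : Fin n → K) (y : R) :
    y ^ wt K v = ∏ i, if v i = 0 then 1 else y := by
  rw [Finset.prod_ite, Finset.prod_const_one, one_mul, Finset.prod_const, wt]

theorem wt_le (v : Fin n → K) : wt K v ≤ n := by
  simpa [wt] using Finset.card_filter_le Finset.univ fun i => v i ≠ 0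

theorem card_filter_eq_zero_eq_sub_wt (v : Fin n → K) :
    (Finset.univ.filter fun i => v i = 0).card = n - wt K v := by
  have h := Finset.card_filter_add_card_filter_not (s := Finset.univ) (fun i => v i = 0)
  rw [Finset.card_univ, Fintype.card_fin] at h
  rw [wt]
  simp only [ne_eq]
  omega

end HammingWeight

theorem AddChar.IsPrimitive.sum_mul_pow_wt {K : Type} {R : Type*} [Field K] [Fintype K]
    [CommRing R] [IsDomain R] {ψ : AddChar K R} (hψ : ψ.IsPrimitive) {n : ℕ} (u : Fin n → K)
    (y : R) :
    ∑ v : Fin n → K, ψ (v ⬝ᵥ u) * y ^ wt K v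
      = (1 + ((Fintype.card K : R) - 1) * y) ^ (n - wt K u) * (1 - y) ^ wt K u := by
  calc _ = ∑ v : Fin n → K, ∏ i, ψ (v i * u i) * (if v i = 0 then 1 else y) := by
        refine Finset.sum_congr rfl fun v _ => ?_
        rw [Finset.prod_mul_distrib, ← pow_wt_eq_prod, dotProduct, map_sum_eq_prod]
    _ = ∏ i, ∑ t : K, ψ (t * u i) * (if t = 0 then 1 else y) :=
        (Fintype.prod_sum (κ := fun _ => K) fun i t => ψ (t * u i) * (if t = 0 then 1 else y)).symm
    _ = ∏ i, if u i = 0 then 1 + ((Fintype.card K : R) - 1) * y else 1 - y := by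
        simp only [hψ.sum_mul_ite]
    _ = _ := by
        rw [Finset.prod_ite, Finset.prod_const, Finset.prod_const, card_filter_eq_zero_eq_sub_wt,
          ← wt]

theorem AddChar.IsPrimitive.sum_mul_pow_wt_eq_mul_pow {K : Type} {R : Type*} [Field K]
    [Fintype K] [Field R] {ψ : AddChar K R} (hψ : ψ.IsPrimitive) {n : ℕ} (u : Fin n → K) {y : R}
    (hy : 1 + ((Fintype.card K : R) - 1) * y ≠ 0) :
    ∑ v : Fin n → K, ψ (v ⬝ᵥ u) * y ^ wt K v
      = (1 + ((Fintype.card K : R) - 1) * y) ^ n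
        * ((1 - y) / (1 + ((Fintype.card K : R) - 1) * y)) ^ wt K u := by
  rw [hψ.sum_mul_pow_wt, div_pow, ← pow_sub_mul_pow _ (wt_le u)]
  field_simp

section ConstraintCode

variable {F : Type} [Field F] {m n : ℕ}

def twistedPairing (s : (Fin m → F) × (Fin n → F) × (Fin m → F)) :
    ((Fin m → F) × (Fin n → F) × (Fin m → F)) →ₗ[F] F :=
  dotProductEquiv F (Fin m) s.1 ∘ₗ LinearMap.fst F _ _
    + dotProductEquiv F (Fin n) s.2.1 ∘ₗ LinearMap.fst F _ _ ∘ₗ LinearMap.snd F _ _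
    - dotProductEquiv F (Fin m) s.2.2 ∘ₗ LinearMap.snd F _ _ ∘ₗ LinearMap.snd F _ _

theorem twistedPairing_apply (s t : (Fin m → F) × (Fin n → F) × (Fin m → F)) :
    twistedPairing s t = s.1 ⬝ᵥ t.1 + s.2.1 ⬝ᵥ t.2.1 - s.2.2 ⬝ᵥ t.2.2 := rfl

theorem mem_twistedDual_iff {C : Set ((Fin m → F) × (Fin n → F) × (Fin m → F))}
    {s : (Fin m → F) × (Fin n → F) × (Fin m → F)} :
    s ∈ twistedDual F C ↔ ∀ t ∈ C, twistedPairing s t = 0 := Iff.rfl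

variable [Fintype F]

theorem AddChar.IsPrimitive.sum_twistedPairing {R : Type*} [CommRing R] [IsDomain R]
    {ψ : AddChar F R} (hψ : ψ.IsPrimitive)
    (C : Submodule F ((Fin m → F) × (Fin n → F) × (Fin m → F)))
    (s : (Fin m → F) × (Fin n → F) × (Fin m → F)) :
    ∑ t, (if t ∈ C then ψ (twistedPairing s t) else 0)
      = if s ∈ twistedDual F C then (Fintype.card F : R) ^ Module.finrank F C else 0 := by
  have vanishes_iff : twistedPairing s ∘ₗ C.subtype = 0 ↔ s ∈ twistedDual F C := by
    simp [mem_twistedDual_iff, LinearMap.ext_iff]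
  calc _ = ∑ t : C, ψ ((twistedPairing s ∘ₗ C.subtype) t) := by
        rw [← Finset.sum_filter]
        exact Finset.sum_subtype _ (fun t => by simp) _
    _ = _ := hψ.sum_apply_linearMap _
    _ = _ := by
        simp only [vanishes_iff, Module.card_eq_pow_finrank (K := F) (V := C), Nat.cast_pow]

theorem sum_sum_mul_WAM (C : Set ((Fin m → F) × (Fin n → F) × (Fin m → F)))
    (f : (Fin m → F) → (Fin m → F) → ℂ) (x y : ℂ) :
    ∑ a, ∑ b, f a b * WAM F C x y a b
      = ∑ t : (Fin m → F) × (Fin n → F) × (Fin m → F),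
          if t ∈ C then f t.1 t.2.2 * (x ^ (n - wt F t.2.1) * y ^ wt F t.2.1) else 0 := by
  simp only [WAM, Finset.mul_sum, mul_ite, mul_zero, Fintype.sum_prod_type]
  exact Finset.sum_congr rfl fun a _ => Finset.sum_comm

def charMatrix (ψ : AddChar F ℂ) (m : ℕ) : Matrix (Fin m → F) (Fin m → F) ℂ :=
  fun a b => ψ (a ⬝ᵥ b)

variable {ψ : AddChar F ℂ}

theorem charMatrix_mul_conjTranspose (hψ : ψ.IsPrimitive) :
    charMatrix ψ m * (charMatrix ψ m)ᴴ = (Fintype.card F : ℂ) ^ m • 1 := by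
  ext a b
  have conj_mul : ∀ x : Fin m → F,
      charMatrix ψ m a x * star (charMatrix ψ m b x) = ψ ((a - b) ⬝ᵥ x) := fun x => by
    rw [charMatrix, charMatrix, RCLike.star_def, ← AddChar.map_neg_eq_conj,
      ← AddChar.map_add_eq_mul, sub_dotProduct, sub_eq_add_neg]
  simp only [mul_apply, conjTranspose_apply, conj_mul]
  refine (hψ.sum_apply_dotProduct (a - b)).trans ?_
  simp [one_apply, sub_eq_zero]

theorem charMatrix_mul_mul_conjTranspose_apply (M : Matrix (Fin m → F) (Fin m → F) ℂ)
    (w w' : Fin m → F) :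
    (charMatrix ψ m * M * (charMatrix ψ m)ᴴ) w w' = ∑ a, ∑ b, ψ (w ⬝ᵥ a - w' ⬝ᵥ b) * M a b := by
  simp only [mul_apply, conjTranspose_apply, Finset.sum_mul, charMatrix, RCLike.star_def,
    ← AddChar.map_neg_eq_conj, sub_eq_add_neg, AddChar.map_add_eq_mul]
  rw [Finset.sum_comm]
  exact Finset.sum_congr rfl fun a _ => Finset.sum_congr rfl fun b _ => by ring

theorem charMatrix_mul_WAM_mul_conjTranspose (hψ : ψ.IsPrimitive) {k : ℕ}
    (C : Submodule F ((Fin m → F) × (Fin n → F) × (Fin m → F)))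
    (hC : Module.finrank F C = m + k) {y : ℂ} (hy : 1 + ((Fintype.card F : ℂ) - 1) * y ≠ 0) :
    charMatrix ψ m
        * (((1 + ((Fintype.card F : ℂ) - 1) * y) ^ n / (Fintype.card F : ℂ) ^ k)
          • WAM F (C : Set ((Fin m → F) × (Fin n → F) × (Fin m → F)))
            1 ((1 - y) / (1 + ((Fintype.card F : ℂ) - 1) * y)))
        * (charMatrix ψ m)ᴴ
      = (Fintype.card F : ℂ) ^ m
        • WAM F (twistedDual F (C : Set ((Fin m → F) × (Fin n → F) × (Fin m → F)))) 1 y := by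
  have macWilliams : ∀ u : Fin n → F,
      (1 + ((Fintype.card F : ℂ) - 1) * y) ^ n / (Fintype.card F : ℂ) ^ k
          * ((1 - y) / (1 + ((Fintype.card F : ℂ) - 1) * y)) ^ wt F u
        = ((Fintype.card F : ℂ) ^ k)⁻¹ * ∑ v, ψ (v ⬝ᵥ u) * y ^ wt F v := fun u => by
    rw [hψ.sum_mul_pow_wt_eq_mul_pow u hy]
    ring
  have hq : (Fintype.card F : ℂ) ≠ 0 := Nat.cast_ne_zero.mpr Fintype.card_ne_zero
  set q : ℂ := (Fintype.card F : ℂ)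
  set c := (1 + (q - 1) * y) ^ n / q ^ k
  set z := (1 - y) / (1 + (q - 1) * y)
  set Ĉ := twistedDual F (C : Set ((Fin m → F) × (Fin n → F) × (Fin m → F)))
  ext w w'
  rw [charMatrix_mul_mul_conjTranspose_apply, Matrix.smul_apply, smul_eq_mul]
  calc _ = ∑ t, if t ∈ C then ψ (w ⬝ᵥ t.1 - w' ⬝ᵥ t.2.2) * (c * z ^ wt F t.2.1) else 0 := by
        simp only [Matrix.smul_apply, smul_eq_mul, ← mul_assoc]
        rw [sum_sum_mul_WAM]
        simp only [one_pow, one_mul, mul_assoc, SetLike.mem_coe]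
    _ = (q ^ k)⁻¹ * ∑ v : Fin n → F,
          y ^ wt F v * ∑ t, if t ∈ C then ψ (twistedPairing (w, v, w') t) else 0 := by
        simp only [Finset.mul_sum, mul_ite, mul_zero]
        rw [Finset.sum_comm]
        refine Finset.sum_congr rfl fun t _ => ?_
        split_ifs
        · rw [macWilliams, Finset.mul_sum, Finset.mul_sum]
          refine Finset.sum_congr rfl fun v _ => ?_
          rw [twistedPairing_apply, add_sub_right_comm, AddChar.map_add_eq_mul]
          ring
        · simp
    _ = (q ^ k)⁻¹ * ∑ v : Fin n → F,
          y ^ wt F v * if (w, v, w') ∈ Ĉ then q ^ (m + k) else 0 := by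
        simp only [hψ.sum_twistedPairing, hC]
        rfl
    _ = q ^ m * WAM F Ĉ 1 y w w' := by
        simp only [WAM, one_pow, one_mul, Finset.mul_sum, mul_ite, mul_zero, pow_add]
        refine Finset.sum_congr rfl fun v _ => ?_
        split_ifs
        · field_simp
        · rfl

end ConstraintCode

theorem Matrix.inv_mul_mul_of_mul_eq_one {ι α : Type*} [Fintype ι] [DecidableEq ι] [CommRing α]
    {P Q : Matrix ι ι α} (hPQ : P * Q = 1) (M : Matrix ι ι α) :
    (P * M * Q)⁻¹ = P * M⁻¹ * Q := by
  rw [mul_inv_rev, mul_inv_rev, inv_eq_left_inv hPQ, inv_eq_right_inv hPQ, Matrix.mul_assoc]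

theorem inv_oneSubDM_mul_mul_of_mul_eq_one {F : Type} [Fintype F] {m : ℕ}
    {P Q : Matrix (Fin m → F) (Fin m → F) ℂ} (hPQ : P * Q = 1)
    (M : Matrix (Fin m → F) (Fin m → F) ℂ) :
    (oneSubDM F (P * M * Q))⁻¹
      = P.map PowerSeries.C * (oneSubDM F M)⁻¹ * Q.map PowerSeries.C := by
  have hPQ' : P.map PowerSeries.C * Q.map PowerSeries.C = 1 := by
    rw [← Matrix.map_mul, hPQ, Matrix.map_one _ (map_zero _) (map_one _)]
  have factor : 1 - (PowerSeries.X : PowerSeries ℂ)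
        • (P.map PowerSeries.C * M.map PowerSeries.C * Q.map PowerSeries.C)
      = P.map PowerSeries.C * oneSubDM F M * Q.map PowerSeries.C := by
    rw [oneSubDM, Matrix.mul_sub, Matrix.sub_mul, Matrix.mul_one, hPQ', Matrix.mul_smul,
      Matrix.smul_mul]
  rw [oneSubDM, Matrix.map_mul, Matrix.map_mul, factor, Matrix.inv_mul_mul_of_mul_eq_one hPQ']

section TraceCharacter

variable (p : ℕ) [Fact p.Prime] (F : Type) [Field F] [Algebra (ZMod p) F]

def traceChar : AddChar F ℂ :=
  ZMod.stdAddChar.compAddMonoidHom (Algebra.trace (ZMod p) F).toAddMonoidHom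

variable {p F}

theorem FourierMat_eq_charMatrix (m : ℕ) : FourierMat p F m = charMatrix (traceChar p F) m := by
  ext a b
  rw [FourierMat, charMatrix, traceChar, AddChar.compAddMonoidHom_apply, ZMod.stdAddChar_apply,
    ZMod.toCircle_apply, ← Complex.exp_nat_mul, LinearMap.toAddMonoidHom_coe, dotProduct]
  ring_nf

theorem traceChar_isPrimitive [Fintype F] : (traceChar p F).IsPrimitive := by
  refine AddChar.IsPrimitive.of_ne_one (AddChar.ne_one_iff.mpr ?_)
  obtain ⟨x, hx⟩ : ∃ x, Algebra.trace (ZMod p) F x ≠ 0 :=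
    not_forall.mp fun h => Algebra.trace_ne_zero (ZMod p) F (LinearMap.ext h)
  refine ⟨x, fun h => hx ?_⟩
  rwa [traceChar, AddChar.compAddMonoidHom_apply,
    ← AddChar.map_zero_eq_one (ZMod.stdAddChar (N := p)), ZMod.injective_stdAddChar.eq_iff] at h

end TraceCharacter

theorem stmt11 (m n k : ℕ)
    (C : Submodule F ((Fin m → F) × (Fin n → F) × (Fin m → F)))
    (hC : Module.finrank F C = m + k) (y : ℂ)
    (hy : 1 + ((Fintype.card F : ℂ) - 1) * y ≠ 0) :
    (oneSubDM F (WAM F (twistedDual F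
        (C : Set ((Fin m → F) × (Fin n → F) × (Fin m → F)))) 1 y))⁻¹
        (0 : Fin m → F) (0 : Fin m → F)
      = ((Fintype.card F : ℂ) ^ m)⁻¹ •
          (((FourierMat p F m).map (@PowerSeries.C ℂ _) *
            (oneSubDM F
              (((1 + ((Fintype.card F : ℂ) - 1) * y) ^ n / (Fintype.card F : ℂ) ^ k) •
                WAM F (C : Set ((Fin m → F) × (Fin n → F) × (Fin m → F)))
                  1 ((1 - y) / (1 + ((Fintype.card F : ℂ) - 1) * y))))⁻¹ *
            ((FourierMat p F m)ᴴ).map (@PowerSeries.C ℂ _))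
            (0 : Fin m → F) (0 : Fin m → F)) := by
  have hψ := traceChar_isPrimitive (p := p) (F := F)
  have hq : (Fintype.card F : ℂ) ^ m ≠ 0 :=
    pow_ne_zero _ (Nat.cast_ne_zero.mpr Fintype.card_ne_zero)
  have inverse : charMatrix (traceChar p F) m
      * (((Fintype.card F : ℂ) ^ m)⁻¹ • (charMatrix (traceChar p F) m)ᴴ) = 1 := by
    rw [Matrix.mul_smul, charMatrix_mul_conjTranspose hψ, inv_smul_smul₀ hq]
  rw [(eq_inv_smul_iff₀ hq).mpr (charMatrix_mul_WAM_mul_conjTranspose hψ C hC hy).symm,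
    ← Matrix.mul_smul, inv_oneSubDM_mul_mul_of_mul_eq_one inverse, FourierMat_eq_charMatrix,
    Matrix.map_smul _ _ fun a => by rw [smul_eq_mul, map_mul, PowerSeries.smul_eq_C_mul],
    Matrix.mul_smul, Matrix.smul_apply]
end
end
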